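/- arXiv:1008.1029 — 3 statements merged into one kernel-verified Lean document; each statement's English description precedes it below -/
import Mathlib

section
/- Let A be an m×m matrix over F₂, G_A the gauge group of its generalized Bacon–Shor code and S_A = G_A ∩ C(G_A) its stabilizer group. Then for x ∈ F₂^m the X-type operator P^X(x) = ∑_j x_j C_j belongs to S_A if and only if Ax = 0, and for z ∈ F₂^m the Z-type operator P^Z(z) = ∑_i z_i R_i belongs to S_A if and only if Aᵀz = 0. -/
set_option linter.unusedSectionVars false

open Finset Matrix

abbrev F2 : Type := ZMod 2

abbrev PauliSpace (Q : Type) := Q → F2 × F2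

section Pauli

variable {Q : Type} [Fintype Q] [DecidableEq Q]

/-- Support of a Pauli vector. -/
def psupp (v : PauliSpace Q) : Finset Q := Finset.univ.filter (fun q => v q ≠ (0, 0))

/-- Weight of a Pauli vector. -/
def pwt (v : PauliSpace Q) : ℕ := (psupp v).card

/-- The symplectic form. -/
def omegaF (u v : PauliSpace Q) : F2 :=
  ∑ q, ((u q).1 * (v q).2 + (u q).2 * (v q).1)

lemma omegaF_add_left (u v w : PauliSpace Q) :
    omegaF (u + v) w = omegaF u w + omegaF v w := by
  simp only [omegaF, Pi.add_apply, Prod.fst_add, Prod.snd_add, ← Finset.sum_add_distrib]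
  exact Finset.sum_congr rfl (fun q _ => by ring)

lemma omegaF_smul_left (c : F2) (u w : PauliSpace Q) :
    omegaF (c • u) w = c * omegaF u w := by
  simp only [omegaF, Pi.smul_apply, Prod.smul_fst, Prod.smul_snd, smul_eq_mul,
    Finset.mul_sum]
  exact Finset.sum_congr rfl (fun q _ => by ring)

/-- Centralizer of a subspace w.r.t. the symplectic form. -/
def pcent (G : Submodule F2 (PauliSpace Q)) : Submodule F2 (PauliSpace Q) where
  carrier := {v | ∀ g ∈ G, omegaF v g = 0}
  zero_mem' := by
    intro g _
    simp [omegaF]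
  add_mem' := by
    intro a b ha hb g hg
    rw [omegaF_add_left, ha g hg, hb g hg, add_zero]
  smul_mem' := by
    intro c a ha g hg
    rw [omegaF_smul_left, ha g hg, mul_zero]

/-- Stabilizer group of a gauge group. -/
def pstab (G : Submodule F2 (PauliSpace Q)) : Submodule F2 (PauliSpace Q) := G ⊓ pcent G

/-- Single-qubit Pauli X vector. -/
def Xop (c : Q) : PauliSpace Q := fun q => if q = c then (1, 0) else (0, 0)

/-- Single-qubit Pauli Z vector. -/
def Zop (c : Q) : PauliSpace Q := fun q => if q = c then (0, 1) else (0, 0)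

/-- The set of weights of dressed logical operators; its infimum is the distance. -/
def distSet (G : Submodule F2 (PauliSpace Q)) : Set ℕ :=
  {w | ∃ v, v ∈ pcent (pstab G) ∧ v ∉ G ∧ pwt v = w}

/-- Pauli vectors supported in `M`. -/
def PMod (M : Finset Q) : Submodule F2 (PauliSpace Q) where
  carrier := {v | ∀ q, q ∉ M → v q = 0}
  zero_mem' := by intro q _; rfl
  add_mem' := by
    intro a b ha hb q hq
    simp [Pi.add_apply, ha q hq, hb q hq]
  smul_mem' := by
    intro c a ha q hq
    simp [Pi.smul_apply, ha q hq]

/-- Projection onto the qubits in `M`. -/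
def projL (M : Finset Q) : PauliSpace Q →ₗ[F2] PauliSpace Q where
  toFun v := fun q => if q ∈ M then v q else 0
  map_add' a b := by funext q; by_cases h : q ∈ M <;> simp [h]
  map_smul' c a := by funext q; by_cases h : q ∈ M <;> simp [h]

/-- Number of independent dressed logical operators supported in `M`. -/
noncomputable def lM (G : Submodule F2 (PauliSpace Q)) (M : Finset Q) : ℕ :=
  Module.finrank F2 ↥(pcent ((pstab G).map (projL M)) ⊓ PMod M)
    - Module.finrank F2 ↥(G ⊓ PMod M)

/-- Number of independent bare logical operators supported in `M`. -/
noncomputable def lbareM (G : Submodule F2 (PauliSpace Q)) (M : Finset Q) : ℕ :=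
  Module.finrank F2 ↥(pcent (G.map (projL M)) ⊓ PMod M)
    - Module.finrank F2 ↥(pstab G ⊓ PMod M)

end Pauli

section Classical

variable {ι : Type} [Fintype ι] [DecidableEq ι]

/-- Hamming weight of a classical vector. -/
def hwt (v : ι → F2) : ℕ := (Finset.univ.filter (fun i => v i ≠ 0)).card

/-- Row space of a matrix. -/
def Crow (A : Matrix ι ι F2) : Submodule F2 (ι → F2) := Submodule.span F2 (Set.range A)

/-- Column space of a matrix. -/
def Ccol (A : Matrix ι ι F2) : Submodule F2 (ι → F2) := Submodule.span F2 (Set.range Aᵀ)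

/-- Minimum distance of the row space. -/
noncomputable def drow (A : Matrix ι ι F2) : ℕ := sInf {w | ∃ v ∈ Crow A, v ≠ 0 ∧ hwt v = w}

/-- Minimum distance of the column space. -/
noncomputable def dcol (A : Matrix ι ι F2) : ℕ := sInf {w | ∃ v ∈ Ccol A, v ≠ 0 ∧ hwt v = w}

/-- Number of nonzero entries of a matrix. -/
def nnz (A : Matrix ι ι F2) : ℕ :=
  (Finset.univ.filter (fun p : ι × ι => A p.1 p.2 ≠ 0)).card

end Classical

section BaconShor

variable {m : ℕ}

/-- Qubit set of the generalized Bacon-Shor code: cells with `A i j = 1`. -/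
abbrev QA (A : Matrix (Fin m) (Fin m) F2) : Type := {c : Fin m × Fin m // A c.1 c.2 = 1}

/-- Generators of the gauge group. -/
def gaugeSet (A : Matrix (Fin m) (Fin m) F2) : Set (PauliSpace (QA A)) :=
  {v | ∃ c c' : QA A, c ≠ c' ∧
    ((c.1.1 = c'.1.1 ∧ v = Xop c + Xop c') ∨ (c.1.2 = c'.1.2 ∧ v = Zop c + Zop c'))}

/-- Gauge group of the generalized Bacon-Shor code. -/
def gaugeBS (A : Matrix (Fin m) (Fin m) F2) : Submodule F2 (PauliSpace (QA A)) :=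
  Submodule.span F2 (gaugeSet A)

/-- The row operator `R i`. -/
def Rop (A : Matrix (Fin m) (Fin m) F2) (i : Fin m) : PauliSpace (QA A) :=
  ∑ c ∈ Finset.univ.filter (fun c : QA A => c.1.1 = i), Zop c

/-- The column operator `C j`. -/
def Cop (A : Matrix (Fin m) (Fin m) F2) (j : Fin m) : PauliSpace (QA A) :=
  ∑ c ∈ Finset.univ.filter (fun c : QA A => c.1.2 = j), Xop c

/-- X-type operator parameterized by a binary vector. -/
def PXop (A : Matrix (Fin m) (Fin m) F2) (x : Fin m → F2) : PauliSpace (QA A) :=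
  ∑ j, x j • Cop A j

/-- Z-type operator parameterized by a binary vector. -/
def PZop (A : Matrix (Fin m) (Fin m) F2) (z : Fin m → F2) : PauliSpace (QA A) :=
  ∑ i, z i • Rop A i

end BaconShor

/-- Binary entropy. -/
noncomputable def H2 (p : ℝ) : ℝ := -p * Real.logb 2 p - (1 - p) * Real.logb 2 (1 - p)

/-!
Each row operator `R_i` and column operator `C_j` commutes with every gauge generator, so
`P^X(x) = ∑ x_j C_j` always lies in `C(G_A)`; and since `ω(R_i, P^X(x)) = (Ax)_i`, membership of
`P^X(x)` in `G_A` forces `Ax = 0`. Conversely `P^X(x) = ∑_c x_{col c} X_c`, and when `Ax = 0` the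
coefficients on each row sum to zero, so on that row `P^X(x)` is a combination of the differences
`X_c - X_{c₀}`, which are gauge generators. The `Z`-type statement is the same with rows and
columns exchanged.
-/

section Symplectic

variable {Q : Type} [Fintype Q]

lemma omegaF_add_right (u v w : PauliSpace Q) :
    omegaF u (v + w) = omegaF u v + omegaF u w := by
  simp only [omegaF, Pi.add_apply, Prod.fst_add, Prod.snd_add, ← sum_add_distrib]
  exact sum_congr rfl fun q _ => by ring

lemma omegaF_smul_right (c : F2) (u w : PauliSpace Q) :
    omegaF u (c • w) = c * omegaF u w := by
  simp only [omegaF, Pi.smul_apply, Prod.smul_fst, Prod.smul_snd, smul_eq_mul, mul_sum]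
  exact sum_congr rfl fun q _ => by ring

lemma omegaF_sum_smul_right {ι : Type*} [Fintype ι] (u : PauliSpace Q) (f : ι → F2)
    (v : ι → PauliSpace Q) : omegaF u (∑ i, f i • v i) = ∑ i, f i * omegaF u (v i) := by
  simp only [omegaF, Finset.sum_apply, Pi.smul_apply, Prod.fst_sum, Prod.snd_sum, Prod.smul_fst,
    Prod.smul_snd, smul_eq_mul, mul_sum, ← sum_add_distrib]
  rw [sum_comm]
  exact sum_congr rfl fun i _ => sum_congr rfl fun q _ => by ring

variable [DecidableEq Q]

lemma mem_pcent_span_iff {S : Set (PauliSpace Q)} {v : PauliSpace Q} :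
    v ∈ pcent (Submodule.span F2 S) ↔ ∀ g ∈ S, omegaF v g = 0 := by
  refine ⟨fun h g hg => h g (Submodule.subset_span hg), fun h g hg => ?_⟩
  induction hg using Submodule.span_induction with
  | mem g hg => exact h g hg
  | zero => simp [omegaF]
  | add g g' _ _ hg hg' => rw [omegaF_add_right, hg, hg', add_zero]
  | smul a g _ hg => rw [omegaF_smul_right, hg, mul_zero]

lemma omegaF_Xop_right (u : PauliSpace Q) (c : Q) : omegaF u (Xop c) = (u c).2 := by
  simp [omegaF, Xop, apply_ite]

lemma omegaF_Zop_right (u : PauliSpace Q) (c : Q) : omegaF u (Zop c) = (u c).1 := by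
  simp [omegaF, Zop, apply_ite]

end Symplectic

lemma sum_smul_mem_span_sub_of_sum_fiber_eq_zero {R M Q ι : Type*} [Ring R] [AddCommGroup M]
    [Module R M] [Fintype Q] [Fintype ι] [DecidableEq ι] (r : Q → ι) (e : Q → M) (f : Q → R)
    (hf : ∀ i, ∑ c with r c = i, f c = 0) :
    ∑ c, f c • e c ∈ Submodule.span R {v | ∃ c c', r c = r c' ∧ v = e c - e c'} := by
  rw [← sum_fiberwise univ r]
  refine Submodule.sum_mem _ fun i _ => ?_
  obtain hempty | ⟨c₀, hc₀⟩ := (univ.filter (r · = i)).eq_empty_or_nonempty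
  · simp [hempty]
  have hshift : ∑ c with r c = i, f c • e c = ∑ c with r c = i, f c • (e c - e c₀) := by
    simp only [smul_sub, sum_sub_distrib, ← sum_smul, hf i, zero_smul, sub_zero]
  rw [hshift]
  refine Submodule.sum_mem _ fun c hc => Submodule.smul_mem _ _ (Submodule.subset_span ?_)
  simp only [mem_filter, mem_univ, true_and] at hc hc₀
  exact ⟨c, c₀, hc.trans hc₀.symm, rfl⟩

section BaconShor

variable {m : ℕ} (A : Matrix (Fin m) (Fin m) F2)

lemma sum_qubit_eq_sum_smul {M : Type*} [AddCommMonoid M] [Module F2 M]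
    (g : Fin m × Fin m → M) :
    ∑ c : QA A, g c.1 = ∑ p, A p.1 p.2 • g p := by
  rw [← sum_subtype (univ.filter fun p : Fin m × Fin m => A p.1 p.2 = 1) (by simp), sum_filter]
  refine sum_congr rfl fun p _ => ?_
  obtain h | h : A p.1 p.2 = 0 ∨ A p.1 p.2 = 1 := by generalize A p.1 p.2 = a; decide +revert
  all_goals simp [h]

lemma sum_row_eq_mulVec (x : Fin m → F2) (i : Fin m) :
    ∑ c : QA A with c.1.1 = i, x c.1.2 = (A *ᵥ x) i := by
  rw [sum_filter, sum_qubit_eq_sum_smul A (fun p => if p.1 = i then x p.2 else 0),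
    Fintype.sum_prod_type]
  simp [mulVec, dotProduct]

lemma sum_col_eq_mulVec_transpose (z : Fin m → F2) (j : Fin m) :
    ∑ c : QA A with c.1.2 = j, z c.1.1 = (Aᵀ *ᵥ z) j := by
  rw [sum_filter, sum_qubit_eq_sum_smul A (fun p => if p.2 = j then z p.1 else 0),
    Fintype.sum_prod_type_right]
  simp [mulVec, dotProduct]

lemma Rop_apply (i : Fin m) (c : QA A) : Rop A i c = (0, if c.1.1 = i then 1 else 0) := by
  simp only [Rop, Finset.sum_apply, Zop, Prod.mk_zero_zero, sum_ite_eq, mem_filter, mem_univ,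
    true_and]
  split_ifs <;> rfl

lemma Cop_apply (j : Fin m) (c : QA A) : Cop A j c = (if c.1.2 = j then 1 else 0, 0) := by
  simp only [Cop, Finset.sum_apply, Xop, Prod.mk_zero_zero, sum_ite_eq, mem_filter, mem_univ,
    true_and]
  split_ifs <;> rfl

lemma PXop_eq_sum (x : Fin m → F2) : PXop A x = ∑ c : QA A, x c.1.2 • Xop c := by
  rw [← sum_fiberwise univ fun c : QA A => c.1.2]
  simp only [PXop, Cop, smul_sum]
  exact sum_congr rfl fun j _ => sum_congr rfl fun c hc => by rw [(mem_filter.mp hc).2]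

lemma PZop_eq_sum (z : Fin m → F2) : PZop A z = ∑ c : QA A, z c.1.1 • Zop c := by
  rw [← sum_fiberwise univ fun c : QA A => c.1.1]
  simp only [PZop, Rop, smul_sum]
  exact sum_congr rfl fun i _ => sum_congr rfl fun c hc => by rw [(mem_filter.mp hc).2]

lemma Rop_mem_pcent (i : Fin m) : Rop A i ∈ pcent (gaugeBS A) := by
  rw [gaugeBS, mem_pcent_span_iff]
  rintro _ ⟨c, c', -, ⟨hrow, rfl⟩ | ⟨-, rfl⟩⟩
  · simp [omegaF_add_right, omegaF_Xop_right, Rop_apply, hrow, CharTwo.add_self_eq_zero]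
  · simp [omegaF_add_right, omegaF_Zop_right, Rop_apply]

lemma Cop_mem_pcent (j : Fin m) : Cop A j ∈ pcent (gaugeBS A) := by
  rw [gaugeBS, mem_pcent_span_iff]
  rintro _ ⟨c, c', -, ⟨-, rfl⟩ | ⟨hcol, rfl⟩⟩
  · simp [omegaF_add_right, omegaF_Xop_right, Cop_apply]
  · simp [omegaF_add_right, omegaF_Zop_right, Cop_apply, hcol, CharTwo.add_self_eq_zero]

lemma PXop_mem_pcent (x : Fin m → F2) : PXop A x ∈ pcent (gaugeBS A) :=
  Submodule.sum_mem _ fun j _ => Submodule.smul_mem _ _ (Cop_mem_pcent A j)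

lemma PZop_mem_pcent (z : Fin m → F2) : PZop A z ∈ pcent (gaugeBS A) :=
  Submodule.sum_mem _ fun i _ => Submodule.smul_mem _ _ (Rop_mem_pcent A i)

lemma omegaF_Rop_PXop (i : Fin m) (x : Fin m → F2) :
    omegaF (Rop A i) (PXop A x) = (A *ᵥ x) i := by
  rw [PXop_eq_sum, omegaF_sum_smul_right, ← sum_row_eq_mulVec, sum_filter]
  simp [omegaF_Xop_right, Rop_apply]

lemma omegaF_Cop_PZop (j : Fin m) (z : Fin m → F2) :
    omegaF (Cop A j) (PZop A z) = (Aᵀ *ᵥ z) j := by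
  rw [PZop_eq_sum, omegaF_sum_smul_right, ← sum_col_eq_mulVec_transpose, sum_filter]
  simp [omegaF_Zop_right, Cop_apply]

lemma PXop_mem_gaugeBS {x : Fin m → F2} (hx : A *ᵥ x = 0) : PXop A x ∈ gaugeBS A := by
  rw [PXop_eq_sum]
  refine Submodule.span_le.mpr ?_ <| sum_smul_mem_span_sub_of_sum_fiber_eq_zero (·.1.1) Xop _
    fun i => by rw [sum_row_eq_mulVec, hx, Pi.zero_apply]
  rintro _ ⟨c, c', hrow, rfl⟩
  obtain rfl | hne := eq_or_ne c c'
  · simp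
  · exact Submodule.subset_span ⟨c, c', hne, Or.inl ⟨hrow, ZModModule.sub_eq_add _ _⟩⟩

lemma PZop_mem_gaugeBS {z : Fin m → F2} (hz : Aᵀ *ᵥ z = 0) : PZop A z ∈ gaugeBS A := by
  rw [PZop_eq_sum]
  refine Submodule.span_le.mpr ?_ <| sum_smul_mem_span_sub_of_sum_fiber_eq_zero (·.1.2) Zop _
    fun j => by rw [sum_col_eq_mulVec_transpose, hz, Pi.zero_apply]
  rintro _ ⟨c, c', hcol, rfl⟩
  obtain rfl | hne := eq_or_ne c c'
  · simp
  · exact Submodule.subset_span ⟨c, c', hne, Or.inr ⟨hcol, ZModModule.sub_eq_add _ _⟩⟩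

end BaconShor

/-- `P^X(x)` is a stabilizer iff `Ax = 0`, and `P^Z(z)` is a stabilizer iff `Aᵀz = 0`. -/
theorem stabilizer_iff_kernel {m : ℕ} (A : Matrix (Fin m) (Fin m) F2) :
    (∀ x : Fin m → F2, (PXop A x ∈ pstab (gaugeBS A) ↔ A.mulVec x = 0)) ∧
    (∀ z : Fin m → F2, (PZop A z ∈ pstab (gaugeBS A) ↔ Aᵀ.mulVec z = 0)) := by
  refine ⟨fun x => ⟨fun ⟨hG, _⟩ => ?_, fun hx => ⟨PXop_mem_gaugeBS A hx, PXop_mem_pcent A x⟩⟩,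
    fun z => ⟨fun ⟨hG, _⟩ => ?_, fun hz => ⟨PZop_mem_gaugeBS A hz, PZop_mem_pcent A z⟩⟩⟩
  · ext i
    rw [← omegaF_Rop_PXop]
    exact Rop_mem_pcent A i _ hG
  · ext j
    rw [← omegaF_Cop_PZop]
    exact Cop_mem_pcent A j _ hG
end

section
/- Let k ≥ 1 and let A be the square matrix over F₂ whose rows and columns are indexed by the nonzero vectors of F₂^k, with entries A_{x,y} = x·y = ∑_{i=1}^k x_i y_i (mod 2). Then: (i) rank(A) = k; (ii) every nonzero element of the row space of A (which equals the column space, as A is symmetric) has Hamming weight exactly 2^{k−1}, so drow(A) = dcol(A) = 2^{k−1}; (iii) the number of nonzero entries of A is |A| = (2^k − 1)·2^{k−1}; consequently 2·drow(A)·dcol(A)·(1 − 2^{−k}) = |A|, i.e. this matrix achieves the bound 2·drow·dcol·(1 − 2^{−k}) ≤ |A| with equality. -/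
set_option linter.unusedSectionVars false

open Finset Matrix

/-! Row `x` of `A` is `y ↦ x ⬝ᵥ y` on the nonzero `y`, so the row space is the image of the
injective linear map `x ↦ (y ↦ x ⬝ᵥ y)`: the `k`-dimensional binary simplex code. For `x ≠ 0` the
functional `x ⬝ᵥ ·` is onto `F₂`, so its two fibres have equal size and every nonzero codeword has
weight `2^(k-1)`. As `A` is symmetric the same holds for columns, and counting the nonzero entries
row by row gives `|A| = (2^k - 1) 2^(k-1)`. -/

lemma zmod_two_ne_zero_iff_eq_one : ∀ a : ZMod 2, a ≠ 0 ↔ a = 1 := by decide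

section Weights

variable {ι : Type} [Fintype ι] [DecidableEq ι]

lemma card_dotProduct_eq_one {x : ι → F2} (hx : x ≠ 0) :
    #{y | x ⬝ᵥ y = 1} = 2 ^ (Fintype.card ι - 1) := by
  obtain ⟨i, hi⟩ := Function.ne_iff.mp hx
  let f : (ι → F2) →+ F2 :=
    { toFun := (x ⬝ᵥ ·), map_zero' := dotProduct_zero x, map_add' := dotProduct_add x }
  have hfib : #{y | f y = 0} = #{y | f y = 1} :=
    AddMonoidHom.card_fiber_eq_of_mem_range f ⟨0, map_zero f⟩
      ⟨Pi.single i 1, by simpa [f] using (zmod_two_ne_zero_iff_eq_one _).1 hi⟩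
  have htotal : #{y | f y = 0} + #{y | f y = 1} = 2 ^ Fintype.card ι := by
    rw [← filter_congr fun y _ => zmod_two_ne_zero_iff_eq_one (f y),
      card_filter_add_card_filter_not, card_univ, Fintype.card_fun, ZMod.card]
  have hι : 0 < Fintype.card ι := Fintype.card_pos_iff.mpr ⟨i⟩
  rw [hfib, ← Nat.two_pow_pred_add_two_pow_pred hι] at htotal
  change #{y | f y = 1} = _
  omega

lemma hwt_restrict_nonzero {V : Type} [Fintype V] [DecidableEq V] [Zero V] (v : V → F2)
    (hv : v 0 = 0) : hwt (fun y : {y : V // y ≠ 0} => v y) = #{y | v y ≠ 0} := by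
  refine card_bij (fun y _ => y.1) (by simp) (by simp) ?_
  simp only [mem_filter, mem_univ, true_and]
  exact fun y hy => ⟨⟨y, fun h => hy (h ▸ hv)⟩, hy, rfl⟩

lemma nnz_eq_sum_hwt (A : Matrix ι ι F2) : nnz A = ∑ i, hwt (A i) := by
  simp only [nnz, hwt, card_filter, ← univ_product_univ, sum_product]

lemma sInf_hwt_eq_of_forall_hwt_eq {C : Submodule F2 (ι → F2)} (hC : C ≠ ⊥) {w : ℕ}
    (h : ∀ v ∈ C, v ≠ 0 → hwt v = w) : sInf {n | ∃ v ∈ C, v ≠ 0 ∧ hwt v = n} = w := by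
  obtain ⟨v, hv, hv0⟩ := Submodule.exists_mem_ne_zero_of_ne_bot hC
  suffices {n | ∃ v ∈ C, v ≠ 0 ∧ hwt v = n} = {w} by rw [this, csInf_singleton]
  ext n
  constructor
  · rintro ⟨u, hu, hu0, rfl⟩
    exact h u hu hu0
  · rintro rfl
    exact ⟨v, hv, hv0, h v hv hv0⟩

end Weights

lemma LinearMap.span_range_nonzero_eq_range {R V W : Type*} [Semiring R] [AddCommMonoid V]
    [Module R V] [AddCommMonoid W] [Module R W] (f : V →ₗ[R] W) :
    Submodule.span R (Set.range fun v : {v : V // v ≠ 0} => f v) = LinearMap.range f := by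
  rw [Set.range_comp' f Subtype.val, Submodule.span_image, Subtype.range_coe_subtype,
    ← Set.compl_singleton_eq, Set.compl_eq_univ_sdiff, Submodule.span_sdiff_singleton_zero,
    Submodule.span_univ, Submodule.map_top]

section SimplexCode

variable (ι : Type) [Fintype ι] [DecidableEq ι]

/-- The range of `mulVec` is the binary simplex code. -/
def simplexMatrix : Matrix {y : ι → F2 // y ≠ 0} ι F2 := Matrix.of fun y => y.1

def dotProductMatrix : Matrix {x : ι → F2 // x ≠ 0} {x : ι → F2 // x ≠ 0} F2 :=
  Matrix.of fun x y => x.1 ⬝ᵥ y.1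

variable {ι}

lemma hwt_simplexMatrix_mulVec {x : ι → F2} (hx : x ≠ 0) :
    hwt (simplexMatrix ι *ᵥ x) = 2 ^ (Fintype.card ι - 1) := by
  have h : simplexMatrix ι *ᵥ x = fun y => x ⬝ᵥ y.1 := funext fun y => dotProduct_comm y.1 x
  rw [h, hwt_restrict_nonzero _ (dotProduct_zero x),
    filter_congr fun y _ => zmod_two_ne_zero_iff_eq_one _, card_dotProduct_eq_one hx]

lemma simplexMatrix_mulVec_injective : Function.Injective (simplexMatrix ι).mulVec := by
  refine (injective_iff_map_eq_zero (simplexMatrix ι).mulVecLin).2 fun x hx => funext fun i => ?_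
  simpa [simplexMatrix, mulVec] using congrFun hx ⟨Pi.single i 1, by simp⟩

lemma dotProductMatrix_apply (x : {x : ι → F2 // x ≠ 0}) :
    dotProductMatrix ι x = simplexMatrix ι *ᵥ x.1 :=
  funext fun y => dotProduct_comm x.1 y.1

lemma dotProductMatrix_transpose : (dotProductMatrix ι)ᵀ = dotProductMatrix ι :=
  Matrix.ext fun x y => dotProduct_comm y.1 x.1

lemma Crow_dotProductMatrix :
    Crow (dotProductMatrix ι) = LinearMap.range (simplexMatrix ι).mulVecLin := by
  rw [Crow, ← LinearMap.span_range_nonzero_eq_range]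
  congr 2
  funext x
  exact dotProductMatrix_apply x

lemma Ccol_dotProductMatrix : Ccol (dotProductMatrix ι) = Crow (dotProductMatrix ι) := by
  rw [Ccol, dotProductMatrix_transpose, Crow]

lemma finrank_Crow_dotProductMatrix :
    Module.finrank F2 (Crow (dotProductMatrix ι)) = Fintype.card ι := by
  rw [Crow_dotProductMatrix, LinearMap.finrank_range_of_inj simplexMatrix_mulVec_injective,
    Module.finrank_fintype_fun_eq_card]

lemma hwt_eq_of_mem_Crow_dotProductMatrix :
    ∀ v ∈ Crow (dotProductMatrix ι), v ≠ 0 → hwt v = 2 ^ (Fintype.card ι - 1) := by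
  rw [Crow_dotProductMatrix]
  rintro _ ⟨x, rfl⟩ hv0
  exact hwt_simplexMatrix_mulVec fun hx => hv0 (by simp [hx])

lemma nnz_dotProductMatrix :
    nnz (dotProductMatrix ι) = (2 ^ Fintype.card ι - 1) * 2 ^ (Fintype.card ι - 1) := by
  have hrow (x : {x : ι → F2 // x ≠ 0}) : hwt (dotProductMatrix ι x) = 2 ^ (Fintype.card ι - 1) :=
    dotProductMatrix_apply x ▸ hwt_simplexMatrix_mulVec x.2
  simp [nnz_eq_sum_hwt, hrow]

end SimplexCode

/-- The binary Hadamard-type matrix `A_{x,y} = x·y`, indexed by the nonzero vectors of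
`F₂^k`, has rank `k`, all nonzero row-space and column-space vectors of Hamming weight
exactly `2^{k−1}` (so `drow = dcol = 2^{k−1}`), exactly `(2^k − 1)·2^{k−1}` nonzero
entries, and achieves the bound `2·drow·dcol·(1 − 2^{−k}) ≤ |A|` with equality. -/
theorem hadamard_matrix_achieves_bound (k : ℕ) (hk : 1 ≤ k)
    (A : Matrix {x : Fin k → F2 // x ≠ 0} {x : Fin k → F2 // x ≠ 0} F2)
    (hA : ∀ x y, A x y = ∑ i, x.1 i * y.1 i) :
    A.rank = k ∧
    (∀ v ∈ Crow A, v ≠ 0 → hwt v = 2 ^ (k - 1)) ∧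
    (∀ v ∈ Ccol A, v ≠ 0 → hwt v = 2 ^ (k - 1)) ∧
    drow A = 2 ^ (k - 1) ∧ dcol A = 2 ^ (k - 1) ∧
    nnz A = (2 ^ k - 1) * 2 ^ (k - 1) ∧
    2 * drow A * dcol A * (2 ^ k - 1) = nnz A * 2 ^ k := by
  obtain rfl : A = dotProductMatrix (Fin k) := Matrix.ext hA
  have hfinrank : Module.finrank F2 (Crow (dotProductMatrix (Fin k))) = k := by
    simpa using finrank_Crow_dotProductMatrix (ι := Fin k)
  have hrow : ∀ v ∈ Crow (dotProductMatrix (Fin k)), v ≠ 0 → hwt v = 2 ^ (k - 1) := by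
    simpa using hwt_eq_of_mem_Crow_dotProductMatrix (ι := Fin k)
  have hcol : ∀ v ∈ Ccol (dotProductMatrix (Fin k)), v ≠ 0 → hwt v = 2 ^ (k - 1) := by
    rwa [Ccol_dotProductMatrix]
  have hne : Crow (dotProductMatrix (Fin k)) ≠ ⊥ := by
    rw [Ne, ← Submodule.finrank_eq_zero, hfinrank]; omega
  have hdrow : drow (dotProductMatrix (Fin k)) = 2 ^ (k - 1) :=
    sInf_hwt_eq_of_forall_hwt_eq hne hrow
  have hdcol : dcol (dotProductMatrix (Fin k)) = 2 ^ (k - 1) := by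
    rw [dcol, Ccol_dotProductMatrix]; exact hdrow
  have hnnz : nnz (dotProductMatrix (Fin k)) = (2 ^ k - 1) * 2 ^ (k - 1) := by
    simpa using nnz_dotProductMatrix (ι := Fin k)
  refine ⟨?_, hrow, hcol, hdrow, hdcol, hnnz, ?_⟩
  · rw [rank_eq_finrank_span_row]; exact hfinrank
  · rw [hdrow, hdcol, hnnz, ← Nat.two_pow_pred_mul_two (by omega : 0 < k)]
    ring
end

section
/- Let Q be a finite qubit set, G ≤ V(Q) any subspace, S = G ∩ C(G), and let k satisfy 2k = dim C(G) − dim S (the number of logical qubits). Then for every subset M ⊆ Q: l_bare(M) + l(Q∖M) = 2k. -/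
set_option linter.unusedSectionVars false

open Finset Matrix

/-! Because `ω` is nondegenerate and `P(Mᶜ)` is the centralizer of `P(M)`, every subspace `W`
satisfies `C(W) ∩ P(M) = C(W + P(Mᶜ))`, whence
`dim (C(W) ∩ P(M)) = dim P(M) - dim W + dim W(Mᶜ)`. Moreover an operator supported in `M` cannot
distinguish `W` from its restriction `W_M`, so `C(W_M) ∩ P(M) = C(W) ∩ P(M)`. Applying the count
to `W = G` on `M` and to `W = S` on `Mᶜ`, the terms `dim G(Mᶜ)` and `dim S(M)` cancel, leaving
`l_bare(M) + l(Mᶜ) = dim V - dim G - dim S = dim C(G) - dim S`. -/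

section Cleaning

variable {Q : Type} [Fintype Q] [DecidableEq Q]

lemma omegaF_comm (u v : PauliSpace Q) : omegaF u v = omegaF v u :=
  Finset.sum_congr rfl fun _ _ => by ring

def symplecticForm : LinearMap.BilinForm F2 (PauliSpace Q) :=
  LinearMap.mk₂ F2 omegaF omegaF_add_left
    (fun c u w => by rw [omegaF_smul_left, smul_eq_mul])
    (fun u v w => by rw [omegaF_comm, omegaF_add_left, omegaF_comm v, omegaF_comm w])
    (fun c u w => by rw [omegaF_comm, omegaF_smul_left, omegaF_comm w, smul_eq_mul])

@[simp] lemma symplecticForm_apply (u v : PauliSpace Q) : symplecticForm u v = omegaF u v := rfl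

lemma mem_pcent {W : Submodule F2 (PauliSpace Q)} {v : PauliSpace Q} :
    v ∈ pcent W ↔ ∀ g ∈ W, omegaF v g = 0 := Iff.rfl

lemma mem_PMod {N : Finset Q} {v : PauliSpace Q} : v ∈ PMod N ↔ ∀ q ∉ N, v q = 0 := Iff.rfl

lemma pcent_eq_orthogonal (W : Submodule F2 (PauliSpace Q)) :
    pcent W = symplecticForm.orthogonal W := by
  ext v
  simp only [mem_pcent, LinearMap.BilinForm.mem_orthogonal_iff, symplecticForm_apply,
    omegaF_comm v]

lemma pcent_sup (W W' : Submodule F2 (PauliSpace Q)) :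
    pcent (W ⊔ W') = pcent W ⊓ pcent W' := by
  ext v
  simp only [Submodule.mem_inf, mem_pcent]
  refine ⟨fun h => ⟨fun g hg => h g (Submodule.mem_sup_left hg),
    fun g hg => h g (Submodule.mem_sup_right hg)⟩, ?_⟩
  rintro ⟨h, h'⟩ _ hsum
  obtain ⟨g, hg, g', hg', rfl⟩ := Submodule.mem_sup.mp hsum
  rw [omegaF_comm, omegaF_add_left, omegaF_comm, omegaF_comm g', h g hg, h' g' hg', add_zero]

lemma Xop_mem_PMod {N : Finset Q} {q : Q} (hq : q ∈ N) : Xop q ∈ PMod N := fun p hp => by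
  simp [Xop, show p ≠ q from fun h => hp (h ▸ hq)]

lemma Zop_mem_PMod {N : Finset Q} {q : Q} (hq : q ∈ N) : Zop q ∈ PMod N := fun p hp => by
  simp [Zop, show p ≠ q from fun h => hp (h ▸ hq)]

lemma omegaF_Xop (v : PauliSpace Q) (q : Q) : omegaF v (Xop q) = (v q).2 := by
  rw [omegaF, Finset.sum_eq_single q (fun p _ hpq => by simp [Xop, hpq]) (by simp)]
  simp [Xop]

lemma omegaF_Zop (v : PauliSpace Q) (q : Q) : omegaF v (Zop q) = (v q).1 := by
  rw [omegaF, Finset.sum_eq_single q (fun p _ hpq => by simp [Zop, hpq]) (by simp)]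
  simp [Zop]

lemma pcent_PMod (N : Finset Q) : pcent (PMod N) = PMod Nᶜ := by
  ext v
  simp only [mem_pcent, mem_PMod, Finset.mem_compl, not_not]
  constructor
  · intro h q hq
    exact Prod.ext (by rw [← omegaF_Zop]; exact h _ (Zop_mem_PMod hq))
      (by rw [← omegaF_Xop]; exact h _ (Xop_mem_PMod hq))
  · intro hv g hg
    refine Finset.sum_eq_zero fun q _ => ?_
    by_cases hq : q ∈ N
    · simp [hv q hq]
    · simp [hg q hq]

lemma ker_symplecticForm :
    LinearMap.ker (symplecticForm : LinearMap.BilinForm F2 (PauliSpace Q)) = ⊥ := by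
  refine (Submodule.eq_bot_iff _).mpr fun v hv => funext fun q => ?_
  have hω (w : PauliSpace Q) : omegaF v w = 0 := LinearMap.congr_fun hv w
  exact Prod.ext (by rw [← omegaF_Zop, hω]; rfl) (by rw [← omegaF_Xop, hω]; rfl)

lemma finrank_pcent_add_finrank (W : Submodule F2 (PauliSpace Q)) :
    Module.finrank F2 (pcent W) + Module.finrank F2 W = Module.finrank F2 (PauliSpace Q) := by
  have := LinearMap.BilinForm.finrank_add_finrank_orthogonal' (B := symplecticForm) W
  rw [ker_symplecticForm, inf_bot_eq, finrank_bot, add_zero, ← pcent_eq_orthogonal] at this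
  omega

lemma finrank_PMod_add_finrank_PMod_compl (N : Finset Q) :
    Module.finrank F2 (PMod N) + Module.finrank F2 (PMod Nᶜ)
      = Module.finrank F2 (PauliSpace Q) := by
  rw [← pcent_PMod, add_comm, finrank_pcent_add_finrank]

lemma finrank_pcent_inf_PMod (W : Submodule F2 (PauliSpace Q)) (N : Finset Q) :
    Module.finrank F2 ↥(pcent W ⊓ PMod N) + Module.finrank F2 W
      = Module.finrank F2 (PMod N) + Module.finrank F2 ↥(W ⊓ PMod Nᶜ) := by
  have hcent : pcent W ⊓ PMod N = pcent (W ⊔ PMod Nᶜ) := by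
    rw [pcent_sup, pcent_PMod, compl_compl]
  have := finrank_pcent_add_finrank (W ⊔ PMod Nᶜ)
  have := Submodule.finrank_sup_add_finrank_inf_eq W (PMod Nᶜ)
  have := finrank_PMod_add_finrank_PMod_compl N
  rw [hcent]
  omega

lemma omegaF_projL {v : PauliSpace Q} {N : Finset Q} (hv : v ∈ PMod N) (g : PauliSpace Q) :
    omegaF v (projL N g) = omegaF v g := by
  refine Finset.sum_congr rfl fun q _ => ?_
  by_cases hq : q ∈ N
  · simp [projL, hq]
  · simp [projL, hq, hv q hq]

lemma pcent_map_projL_inf_PMod (W : Submodule F2 (PauliSpace Q)) (N : Finset Q) :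
    pcent (W.map (projL N)) ⊓ PMod N = pcent W ⊓ PMod N := by
  ext v
  simp only [Submodule.mem_inf, mem_pcent, Submodule.mem_map, forall_exists_index, and_imp,
    forall_apply_eq_imp_iff₂]
  exact and_congr_left fun hv => by simp only [omegaF_projL hv]

lemma pstab_le_pcent (G : Submodule F2 (PauliSpace Q)) : pstab G ≤ pcent G := inf_le_right

lemma le_pcent_pstab (G : Submodule F2 (PauliSpace Q)) : G ≤ pcent (pstab G) :=
  fun g hg s hs => by rw [omegaF_comm]; exact hs.2 g hg

end Cleaning

/-- Cleaning identity (Lemma 2 of the paper, after Yoshida-Chuang): for any subsystem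
code with `k` logical qubits and any subset `M` of qubits,
`l_bare(M) + l(Q∖M) = 2k`. -/
theorem cleaning_identity {Q : Type} [Fintype Q] [DecidableEq Q]
    (G : Submodule F2 (PauliSpace Q)) (k : ℕ)
    (hk : 2 * k = Module.finrank F2 ↥(pcent G) - Module.finrank F2 ↥(pstab G))
    (M : Finset Q) :
    lbareM G M + lM G Mᶜ = 2 * k := by
  have hG := finrank_pcent_inf_PMod G M
  have hS := finrank_pcent_inf_PMod (pstab G) Mᶜ
  rw [compl_compl] at hS
  have hV := finrank_PMod_add_finrank_PMod_compl M
  have hC := finrank_pcent_add_finrank G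
  -- no truncation occurs in the subtractions of `lbareM`, `lM` and `hk`
  have hbare_le := Submodule.finrank_mono (inf_le_inf_right (PMod M) (pstab_le_pcent G))
  have hdressed_le := Submodule.finrank_mono (inf_le_inf_right (PMod Mᶜ) (le_pcent_pstab G))
  have hstab_le := Submodule.finrank_mono (pstab_le_pcent G)
  rw [lbareM, lM, pcent_map_projL_inf_PMod, pcent_map_projL_inf_PMod]
  omega
end
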